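/- arXiv:1511.02942 — 2 statements merged into one kernel-verified Lean document; each statement's English description precedes it below -/
import Mathlib

section
/- Consider the Normalized ExtraPush iteration: x^t = D^{-1} z^t for all t ≥ 0; z^1 = A z^0 − α ∇f(x^0); and z^t = (A + I_n) z^{t−1} − Ā z^{t−2} − α(∇f(x^{t−1}) − ∇f(x^{t−2})) for t ≥ 2, where α > 0 and z^0 ∈ ℝ^{n×p} is arbitrary. Define y^t := Σ_{k=0}^t (Ā − A) z^k. Suppose there exist z*, y* ∈ ℝ^{n×p} and a strictly increasing sequence of indices (t_j) such that z^{t_j} → z*, z^{t_j+1} → z*, y^{t_j} → y*, and y^{t_j+1} → y* as j → ∞. Then, setting x* := D^{-1} z*, the triple (z*, y*, x*) satisfies the first-order optimality conditions: A z* = z*, 1_n^T y* = 0, y* + α ∇f(x*) = 0, and x* = D^{-1} z*. -/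
open Matrix Filter Topology

/-- The rows of the gradient matrix `∇f(x)` are the gradients `∇fᵢ(x₍ᵢ₎)`. -/
noncomputable def gradMat {n p : ℕ}
    (g : Fin n → EuclideanSpace ℝ (Fin p) → EuclideanSpace ℝ (Fin p))
    (x : Matrix (Fin n) (Fin p) ℝ) : Matrix (Fin n) (Fin p) ℝ :=
  Matrix.of fun i j => g i ((WithLp.equiv 2 (Fin p → ℝ)).symm (x i)) j

/-! Summing the recursion telescopes it into the primal–dual form
`z^{t+1} = Ā z^t - y^t - α ∇f(x^t)`. Along the subsequence,
`y^{t_j+1} - y^{t_j} = (Ā - A) z^{t_j+1}` tends both to `0` and to `(Ā - A) z* = ½ (I - A) z*`,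
so `A z* = z*`. The columns of `Ā - A` sum to zero, hence so do those of every `y^t` and of `y*`.
Finally, `∇f` is continuous, so the telescoped recursion passes to the limit as
`z* = Ā z* - y* - α ∇f(x*) = z* - y* - α ∇f(x*)`. -/

theorem Matrix.tendsto_iff_tendsto_apply {ι m n R : Type*} [TopologicalSpace R]
    {l : Filter ι} {M : ι → Matrix m n R} {L : Matrix m n R} :
    Tendsto M l (𝓝 L) ↔ ∀ i j, Tendsto (fun k => M k i j) l (𝓝 (L i j)) :=
  tendsto_pi_nhds.trans (forall_congr' fun _ => tendsto_pi_nhds)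

@[fun_prop]
theorem continuous_gradMat {n p : ℕ}
    {g : Fin n → EuclideanSpace ℝ (Fin p) → EuclideanSpace ℝ (Fin p)}
    (hg : ∀ i, Continuous (g i)) : Continuous (gradMat g) :=
  continuous_matrix fun i j =>
    (PiLp.continuous_apply 2 _ j).comp ((hg i).comp ((PiLp.continuous_toLp 2 _).comp
      (continuous_apply i)))

theorem tendsto_nhds_zero_of_partialSums_tendsto {E : Type*} [AddCommGroup E]
    [TopologicalSpace E] [IsTopologicalAddGroup E] {w : ℕ → E} {tj : ℕ → ℕ} {s : E}
    (h₀ : Tendsto (fun k => ∑ i ∈ Finset.range (tj k + 1), w i) atTop (𝓝 s))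
    (h₁ : Tendsto (fun k => ∑ i ∈ Finset.range (tj k + 2), w i) atTop (𝓝 s)) :
    Tendsto (fun k => w (tj k + 1)) atTop (𝓝 0) := by
  simpa [Finset.sum_range_succ _ (tj _ + 1)] using h₁.sub h₀

theorem Matrix.sum_mul_apply_eq_zero {m n o R : Type*} [Fintype m] [Fintype n] [CommSemiring R]
    {B : Matrix m n R} (hB : ∀ j, ∑ i, B i j = 0) (M : Matrix n o R) (j : o) :
    ∑ i, (B * M) i j = 0 := by
  simp only [mul_apply]
  rw [Finset.sum_comm]
  simp [← Finset.sum_mul, hB]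

section LazyMatrix

variable {n R : Type*} [DecidableEq n] [Field R] [CharZero R] {A : Matrix n n R}

theorem Matrix.half_one_add_sub_self : (2⁻¹ : R) • (1 + A) - A = (2⁻¹ : R) • (1 - A) := by
  module

theorem Matrix.sum_half_one_add_sub_apply_eq_zero [Fintype n] (hA : ∀ j, ∑ i, A i j = 1)
    (j : n) :
    ∑ i, ((2⁻¹ : R) • (1 + A) - A) i j = 0 := by
  rw [half_one_add_sub_self]
  simp [← Finset.mul_sum, Finset.sum_sub_distrib, hA, one_apply]

theorem Matrix.half_one_add_sub_mul_eq_zero_iff [Fintype n] {p : Type*} {M : Matrix n p R} :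
    ((2⁻¹ : R) • (1 + A) - A) * M = 0 ↔ A * M = M := by
  rw [half_one_add_sub_self, smul_mul, smul_eq_zero, Matrix.sub_mul, Matrix.one_mul, sub_eq_zero,
    eq_comm (a := M)]
  simp

theorem Matrix.half_one_add_mul_eq_self_of_mul_eq_self [Fintype n] {p : Type*} {M : Matrix n p R}
    (hM : A * M = M) : (2⁻¹ : R) • (1 + A) * M = M := by
  rw [smul_mul, Matrix.add_mul, Matrix.one_mul, hM]
  module

end LazyMatrix

theorem eq_of_tendsto_of_forall_succ_eq {X Y : Type*} [TopologicalSpace X] [T2Space X]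
    [TopologicalSpace Y] {F : X × Y → X} (hF : Continuous F) {u : ℕ → X} {v : ℕ → Y}
    (huv : ∀ t, u (t + 1) = F (u t, v t)) {tj : ℕ → ℕ} {a : X} {b : Y}
    (hu : Tendsto (fun k => u (tj k)) atTop (𝓝 a))
    (hv : Tendsto (fun k => v (tj k)) atTop (𝓝 b))
    (hu₁ : Tendsto (fun k => u (tj k + 1)) atTop (𝓝 a)) : a = F (a, b) := by
  refine tendsto_nhds_unique hu₁ ?_
  simp only [huv]
  exact (hF.tendsto (a, b)).comp (hu.prodMk_nhds hv)

theorem extraPush_succ_eq {n p R : Type*} [Fintype n] [DecidableEq n] [CommRing R]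
    {A Abar : Matrix n n R} {α : R} {z G y : ℕ → Matrix n p R}
    (hz1 : z 1 = A * z 0 - α • G 0)
    (hrec : ∀ t, z (t + 2) = (A + 1) * z (t + 1) - Abar * z t - α • (G (t + 1) - G t))
    (hy : ∀ t, y t = ∑ k ∈ Finset.range (t + 1), (Abar - A) * z k) (t : ℕ) :
    z (t + 1) = Abar * z t - y t - α • G t := by
  induction t with
  | zero => simp [hz1, hy, Matrix.sub_mul]
  | succ t ih =>
    rw [hrec, hy (t + 1), Finset.sum_range_succ, ← hy, ih]
    simp only [Matrix.add_mul, Matrix.sub_mul, Matrix.one_mul, smul_sub]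
    abel

theorem normalizedExtraPush_limit_point_optimality_general
    {n p : ℕ}
    (A : Matrix (Fin n) (Fin n) ℝ)
    (hA1 : ∀ j, ∑ i, A i j = 1)
    (Abar : Matrix (Fin n) (Fin n) ℝ) (hAbar : Abar = (2⁻¹ : ℝ) • (1 + A))
    (D : Matrix (Fin n) (Fin n) ℝ)
    (g : Fin n → EuclideanSpace ℝ (Fin p) → EuclideanSpace ℝ (Fin p))
    (hgcont : ∀ i, Continuous (g i))
    (α : ℝ)
    (z x : ℕ → Matrix (Fin n) (Fin p) ℝ)
    (hx : ∀ t, x t = D⁻¹ * z t)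
    (hz1 : z 1 = A * z 0 - α • gradMat g (x 0))
    (hrec : ∀ t, z (t + 2) =
      (A + 1) * z (t + 1) - Abar * z t - α • (gradMat g (x (t + 1)) - gradMat g (x t)))
    (y : ℕ → Matrix (Fin n) (Fin p) ℝ)
    (hy : ∀ t, y t = ∑ k ∈ Finset.range (t + 1), (Abar - A) * z k)
    (zs ys : Matrix (Fin n) (Fin p) ℝ)
    (tj : ℕ → ℕ)
    (hzlim : ∀ i j, Tendsto (fun k => z (tj k) i j) atTop (𝓝 (zs i j)))
    (hzlim1 : ∀ i j, Tendsto (fun k => z (tj k + 1) i j) atTop (𝓝 (zs i j)))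
    (hylim : ∀ i j, Tendsto (fun k => y (tj k) i j) atTop (𝓝 (ys i j)))
    (hylim1 : ∀ i j, Tendsto (fun k => y (tj k + 1) i j) atTop (𝓝 (ys i j))) :
    A * zs = zs ∧
    (∀ j, ∑ i, ys i j = 0) ∧
    ys + α • gradMat g (D⁻¹ * zs) = 0 ∧
    D⁻¹ * zs = D⁻¹ * zs := by
  subst hAbar
  have hz₀ := Matrix.tendsto_iff_tendsto_apply.2 hzlim
  have hz₁ := Matrix.tendsto_iff_tendsto_apply.2 hzlim1
  have hy₀ := Matrix.tendsto_iff_tendsto_apply.2 hylim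
  have hy₁ := Matrix.tendsto_iff_tendsto_apply.2 hylim1
  have hAzs : A * zs = zs := Matrix.half_one_add_sub_mul_eq_zero_iff.1 <|
    tendsto_nhds_unique (((continuous_const.matrix_mul continuous_id).tendsto zs).comp hz₁)
      (tendsto_nhds_zero_of_partialSums_tendsto (w := fun k => _ * z k) (tj := tj)
        (by simpa only [← hy] using hy₀) (by simpa only [← hy] using hy₁))
  have hfix : zs = (2⁻¹ : ℝ) • (1 + A) * zs - ys - α • gradMat g (D⁻¹ * zs) :=
    eq_of_tendsto_of_forall_succ_eq
      (F := fun w => (2⁻¹ : ℝ) • (1 + A) * w.1 - w.2 - α • gradMat g (D⁻¹ * w.1))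
      (by fun_prop (disch := exact hgcont))
      (fun t => by rw [extraPush_succ_eq (G := fun t => gradMat g (x t)) hz1 hrec hy, hx])
      hz₀ hy₀ hz₁
  refine ⟨hAzs, fun j => ?_, ?_, rfl⟩
  · refine tendsto_nhds_unique (tendsto_finsetSum _ fun i _ => hylim i j) ?_
    simp only [hy, ← Matrix.mul_sum, sum_mul_apply_eq_zero
      (sum_half_one_add_sub_apply_eq_zero hA1), tendsto_const_nhds]
  · rwa [half_one_add_mul_eq_self_of_mul_eq_self hAzs, sub_sub, eq_comm, sub_eq_self] at hfix

/-- any limit point `(z*, y*)` (along a subsequence, together with its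
shift by one) of the Normalized ExtraPush iteration satisfies, with `x* := D⁻¹ z*`,
the first-order optimality conditions `A z* = z*`, `1ₙᵀ y* = 0`,
`y* + α ∇f(x*) = 0`, `x* = D⁻¹ z*`. -/
theorem normalizedExtraPush_limit_point_optimality
    {n p : ℕ} (hn : 1 ≤ n) (hp : 1 ≤ p)
    (A : Matrix (Fin n) (Fin n) ℝ)
    (hA0 : ∀ i j, 0 ≤ A i j) (hA1 : ∀ j, ∑ i, A i j = 1)
    (Abar : Matrix (Fin n) (Fin n) ℝ) (hAbar : Abar = (2⁻¹ : ℝ) • (1 + A))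
    (φ : Fin n → ℝ) (hφpos : ∀ i, 0 < φ i) (hφ1 : ∑ i, φ i = 1)
    (hconv : ∀ i j, Tendsto (fun t : ℕ => (A ^ t) i j) atTop (𝓝 (φ i)))
    (D : Matrix (Fin n) (Fin n) ℝ) (hD : D = (n : ℝ) • Matrix.diagonal φ)
    (f : Fin n → EuclideanSpace ℝ (Fin p) → ℝ)
    (g : Fin n → EuclideanSpace ℝ (Fin p) → EuclideanSpace ℝ (Fin p))
    (hconvex : ∀ i, ConvexOn ℝ Set.univ (f i))
    (hgrad : ∀ i y, HasGradientAt (f i) (g i y) y)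
    (hgcont : ∀ i, Continuous (g i))
    (α : ℝ) (hα : 0 < α)
    (z x : ℕ → Matrix (Fin n) (Fin p) ℝ)
    (hx : ∀ t, x t = D⁻¹ * z t)
    (hz1 : z 1 = A * z 0 - α • gradMat g (x 0))
    (hrec : ∀ t, z (t + 2) =
      (A + 1) * z (t + 1) - Abar * z t - α • (gradMat g (x (t + 1)) - gradMat g (x t)))
    (y : ℕ → Matrix (Fin n) (Fin p) ℝ)
    (hy : ∀ t, y t = ∑ k ∈ Finset.range (t + 1), (Abar - A) * z k)
    (zs ys : Matrix (Fin n) (Fin p) ℝ)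
    (tj : ℕ → ℕ) (htj : StrictMono tj)
    (hzlim : ∀ i j, Tendsto (fun k => z (tj k) i j) atTop (𝓝 (zs i j)))
    (hzlim1 : ∀ i j, Tendsto (fun k => z (tj k + 1) i j) atTop (𝓝 (zs i j)))
    (hylim : ∀ i j, Tendsto (fun k => y (tj k) i j) atTop (𝓝 (ys i j)))
    (hylim1 : ∀ i j, Tendsto (fun k => y (tj k + 1) i j) atTop (𝓝 (ys i j))) :
    A * zs = zs ∧
    (∀ j, ∑ i, ys i j = 0) ∧
    ys + α • gradMat g (D⁻¹ * zs) = 0 ∧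
    D⁻¹ * zs = D⁻¹ * zs :=
  normalizedExtraPush_limit_point_optimality_general A hA1 Abar hAbar D g hgcont α z x hx hz1 hrec y
    hy zs ys tj hzlim hzlim1 hylim hylim1
end

section
/- Let N, M ∈ ℝ^{n×n}, G := [[N^T, 0], [0, M]] ∈ ℝ^{2n×2n} and S := [[0, M], [−M^T, 0]] ∈ ℝ^{2n×2n} in 2×2 block form. For v = (z; u) ∈ ℝ^{2n×p} define ∇f̄(v) := (g(z); 0), where g : ℝ^{n×p} → ℝ^{n×p} satisfies, for constants μ̄ > 0, L̄ > 0 and a fixed z* ∈ ℝ^{n×p}: μ̄‖z* − z‖² ≤ ⟨g(z*) − g(z), z* − z⟩ for all z, and ‖g(z₁) − g(z₂)‖ ≤ L̄‖z₁ − z₂‖ for all z₁, z₂. Let α > 0, let the sequence v^t = (z^t; u^t) satisfy u^{t+1} = u^t + z^{t+1} and G^T(v^{t+1} − v^t) = −S v^{t+1} − α ∇f̄(v^t) for all t, and let v* = (z*; u*) satisfy M z* = 0 and S v* + α ∇f̄(v*) = 0. Then for any tunable parameters σ > 0 and η > 0 and every t: ‖v^{t+1} − v*‖_G² − ‖v^t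 − v*‖_G² ≤ −‖v^{t+1} − v^t‖_G² + ‖z^{t+1} − z^t‖²_{(σ/2)NN^T + (αL̄²/(2η))I_n} − ‖z* − z^{t+1}‖²_{(αμ̄ − αη/2 − 1/σ)I_n} + (σ/2)‖u* − u^{t+1}‖²_{MM^T}. -/
open Matrix

/-- Frobenius (trace) inner product of two real matrices. -/
noncomputable def frob {m q : Type*} [Fintype m] [Fintype q]
    (X Y : Matrix m q ℝ) : ℝ := ∑ i, ∑ j, X i j * Y i j

/-- Frobenius norm of a real matrix. -/
noncomputable def fnorm {m q : Type*} [Fintype m] [Fintype q]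
    (X : Matrix m q ℝ) : ℝ := Real.sqrt (frob X X)

/-- Weighted squared norm `‖X‖²_H := ⟨X, H X⟩` (with `H` not necessarily symmetric). -/
noncomputable def qnorm {m : Type*} {q : Type*} [Fintype m] [Fintype q]
    (H : Matrix m m ℝ) (X : Matrix m q ℝ) : ℝ := frob X (H * X)

/-- Vertical stacking `(X; Y)` of two `n × p` matrices into a `2n × p` matrix. -/
def vstack {n p : ℕ} (X Y : Matrix (Fin n) (Fin p) ℝ) :
    Matrix (Fin n ⊕ Fin n) (Fin p) ℝ := Matrix.of (Sum.elim X Y)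

/-! With `x = v^{t+1} − v^t` and `y = v^{t+1} − v*` the left side equals
`−‖x‖²_G + ⟨G x, y⟩ + ⟨Gᵀ x, y⟩`. Subtracting the optimality condition from the iteration gives
`Gᵀ x = −S y − α (∇f̄(v^t) − ∇f̄(v*))`, and `⟨S y, y⟩ = 0` because `S` is skew, so `⟨Gᵀ x, y⟩` is a
pure gradient term: strong monotonicity at `z*`, the Lipschitz bound and Young's inequality with
weight `η` control it. Because `M z* = 0`,
`⟨G x, y⟩ = ⟨Nᵀ(z^{t+1} − z^t) + Mᵀ(u^{t+1} − u*), z^{t+1} − z*⟩`, which Young's inequality with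
weight `σ` controls. -/

section Frobenius

variable {m q r : Type*} [Fintype m] [Fintype q] [Fintype r]

lemma frob_comm (X Y : Matrix m q ℝ) : frob X Y = frob Y X := by
  simp [frob, mul_comm]

lemma frob_self_nonneg (X : Matrix m q ℝ) : 0 ≤ frob X X :=
  Finset.sum_nonneg fun _ _ => Finset.sum_nonneg fun _ _ => mul_self_nonneg _

lemma fnorm_sq (X : Matrix m q ℝ) : fnorm X ^ 2 = frob X X :=
  Real.sq_sqrt (frob_self_nonneg X)

lemma frob_add_left (X Y Z : Matrix m q ℝ) : frob (X + Y) Z = frob X Z + frob Y Z := by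
  simp [frob, add_mul, Finset.sum_add_distrib]

lemma frob_sub_left (X Y Z : Matrix m q ℝ) : frob (X - Y) Z = frob X Z - frob Y Z := by
  simp [frob, sub_mul, Finset.sum_sub_distrib]

lemma frob_sub_right (X Y Z : Matrix m q ℝ) : frob X (Y - Z) = frob X Y - frob X Z := by
  simp [frob, mul_sub, Finset.sum_sub_distrib]

lemma frob_neg_left (X Y : Matrix m q ℝ) : frob (-X) Y = -frob X Y := by
  simp [frob]

lemma frob_neg_right (X Y : Matrix m q ℝ) : frob X (-Y) = -frob X Y := by
  simp [frob]

lemma frob_smul_left (c : ℝ) (X Y : Matrix m q ℝ) : frob (c • X) Y = c * frob X Y := by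
  simp [frob, Finset.mul_sum, mul_assoc]

lemma frob_smul_right (c : ℝ) (X Y : Matrix m q ℝ) : frob X (c • Y) = c * frob X Y := by
  rw [frob_comm, frob_smul_left, frob_comm]

lemma frob_eq_trace (X Y : Matrix m q ℝ) : frob X Y = trace (Xᵀ * Y) := by
  simp only [frob, trace, diag, mul_apply, transpose_apply]
  rw [Finset.sum_comm]

lemma frob_mul_left (A : Matrix m r ℝ) (X : Matrix r q ℝ) (Y : Matrix m q ℝ) :
    frob (A * X) Y = frob X (Aᵀ * Y) := by
  rw [frob_eq_trace, frob_eq_trace, transpose_mul, Matrix.mul_assoc]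

lemma frob_le_young {c : ℝ} (hc : 0 < c) (X Y : Matrix m q ℝ) :
    frob X Y ≤ c / 2 * frob X X + 1 / (2 * c) * frob Y Y := by
  have h := frob_self_nonneg (c • X - Y)
  simp only [frob_sub_left, frob_sub_right, frob_smul_left, frob_smul_right, frob_comm Y X] at h
  rw [div_mul_eq_mul_div, one_div_mul_eq_div, div_add_div _ _ two_ne_zero (by positivity),
    le_div_iff₀ (by positivity)]
  nlinarith

lemma frob_mul_self_eq_zero_of_transpose_eq_neg {S : Matrix m m ℝ} (hS : Sᵀ = -S)
    (Y : Matrix m q ℝ) : frob (S * Y) Y = 0 := by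
  have h : frob (S * Y) Y = frob Y (-(S * Y)) := by
    rw [frob_mul_left, hS, Matrix.neg_mul]
  rw [frob_neg_right, frob_comm Y] at h
  linarith

lemma frob_self_sub_comm (X Y : Matrix m q ℝ) : frob (X - Y) (X - Y) = frob (Y - X) (Y - X) := by
  rw [← neg_sub, frob_neg_left, frob_neg_right, neg_neg]

lemma qnorm_neg (H : Matrix m m ℝ) (X : Matrix m q ℝ) : qnorm H (-X) = qnorm H X := by
  simp [qnorm, frob_neg_left, frob_neg_right]

lemma qnorm_add_left (A B : Matrix m m ℝ) (X : Matrix m q ℝ) :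
    qnorm (A + B) X = qnorm A X + qnorm B X := by
  simp [qnorm, Matrix.add_mul, frob_comm X, frob_add_left]

lemma qnorm_smul_left (c : ℝ) (A : Matrix m m ℝ) (X : Matrix m q ℝ) :
    qnorm (c • A) X = c * qnorm A X := by
  rw [qnorm, smul_mul, frob_smul_right, qnorm]

lemma qnorm_one [DecidableEq m] (X : Matrix m q ℝ) : qnorm 1 X = frob X X := by
  rw [qnorm, Matrix.one_mul]

lemma qnorm_mul_transpose (A : Matrix m m ℝ) (X : Matrix m q ℝ) :
    qnorm (A * Aᵀ) X = frob (Aᵀ * X) (Aᵀ * X) := by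
  rw [qnorm, Matrix.mul_assoc, frob_comm, frob_mul_left]

lemma qnorm_sub_qnorm_sub_eq_of_skew {G S : Matrix m m ℝ} (hS : Sᵀ = -S) {x y w : Matrix m q ℝ}
    (h : Gᵀ * x = -(S * y) - w) :
    qnorm G y - qnorm G (y - x) = -qnorm G x + frob (G * x) y - frob w y := by
  have hGx : frob x (G * y) = frob (Gᵀ * x) y := by
    rw [frob_mul_left, transpose_transpose]
  have hGT : frob (Gᵀ * x) y = -frob w y := by
    rw [h, frob_sub_left, frob_neg_left, frob_mul_self_eq_zero_of_transpose_eq_neg hS]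
    ring
  simp only [qnorm, Matrix.mul_sub, frob_sub_left, frob_sub_right] at hGx ⊢
  rw [frob_comm y (G * x)]
  linarith

lemma le_frob_sub_of_strongMonotone_of_lipschitz {g : Matrix m q ℝ → Matrix m q ℝ}
    {μ L η : ℝ} (hη : 0 < η) {zs : Matrix m q ℝ}
    (hmono : ∀ z, μ * fnorm (zs - z) ^ 2 ≤ frob (g zs - g z) (zs - z))
    (hlip : ∀ z₁ z₂, fnorm (g z₁ - g z₂) ≤ L * fnorm (z₁ - z₂)) (z z' : Matrix m q ℝ) :
    (μ - η / 2) * frob (zs - z') (zs - z') - L ^ 2 / (2 * η) * frob (z' - z) (z' - z) ≤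
      frob (g zs - g z) (zs - z') := by
  have hstrong := hmono z'
  rw [fnorm_sq] at hstrong
  have hL : frob (g z - g z') (g z - g z') ≤ L ^ 2 * frob (z - z') (z - z') := by
    rw [← fnorm_sq, ← fnorm_sq, ← mul_pow]
    exact pow_le_pow_left₀ (Real.sqrt_nonneg _) (hlip z z') 2
  have hyoung := frob_le_young hη (zs - z') (g z - g z')
  have hscaled := mul_le_mul_of_nonneg_left hL (by positivity : (0 : ℝ) ≤ 1 / (2 * η))
  have hsplit : g zs - g z = (g zs - g z') - (g z - g z') := by abel
  rw [hsplit, frob_sub_left (g zs - g z'), frob_comm (g z - g z')]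
  have hcoef : L ^ 2 / (2 * η) * frob (z' - z) (z' - z) =
      1 / (2 * η) * (L ^ 2 * frob (z - z') (z - z')) := by
    rw [frob_self_sub_comm z']
    ring
  linarith

end Frobenius

section Blocks

variable {n p : ℕ}

lemma vstack_sub (X Y Z W : Matrix (Fin n) (Fin p) ℝ) :
    vstack X Y - vstack Z W = vstack (X - Z) (Y - W) := by
  ext (i | i) j <;> rfl

lemma frob_vstack (X Y Z W : Matrix (Fin n) (Fin p) ℝ) :
    frob (vstack X Y) (vstack Z W) = frob X Z + frob Y W := by
  simp only [frob, Fintype.sum_sum_type]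
  rfl

lemma fromBlocks_mul_vstack (A B C D : Matrix (Fin n) (Fin n) ℝ)
    (X Y : Matrix (Fin n) (Fin p) ℝ) :
    fromBlocks A B C D * vstack X Y = vstack (A * X + B * Y) (C * X + D * Y) :=
  fromBlocks_mul_fromRows X Y A B C D

lemma extraPush_step_identity {N M : Matrix (Fin n) (Fin n) ℝ}
    {G S : Matrix (Fin n ⊕ Fin n) (Fin n ⊕ Fin n) ℝ}
    (hG : G = fromBlocks Nᵀ 0 0 M) (hS : S = fromBlocks 0 M (-Mᵀ) 0)
    {g : Matrix (Fin n) (Fin p) ℝ → Matrix (Fin n) (Fin p) ℝ} {α : ℝ}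
    {z z' u u' zs us : Matrix (Fin n) (Fin p) ℝ} (hu : u' = u + z')
    (hit : Gᵀ * (vstack z' u' - vstack z u) = -(S * vstack z' u') - α • vstack (g z) 0)
    (hMz : M * zs = 0) (hopt : S * vstack zs us + α • vstack (g zs) 0 = 0) :
    qnorm G (vstack z' u' - vstack zs us) - qnorm G (vstack z u - vstack zs us) =
      -qnorm G (vstack z' u' - vstack z u) + frob (Nᵀ * (z' - z)) (z' - zs) +
        frob (Mᵀ * (u' - us)) (z' - zs) - α * frob (g zs - g z) (zs - z') := by
  have hskew : Sᵀ = -S := by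
    rw [hS, fromBlocks_transpose, fromBlocks_neg]
    simp
  have hsplit : vstack (g z - g zs) 0 = vstack (g z) 0 - vstack (g zs) 0 := by
    rw [vstack_sub, sub_zero]
  have hstep : Gᵀ * (vstack z' u' - vstack z u) =
      -(S * (vstack z' u' - vstack zs us)) - α • vstack (g z - g zs) 0 := by
    rw [hit, Matrix.mul_sub, eq_neg_of_add_eq_zero_left hopt, hsplit, smul_sub]
    abel
  have hMz' : M * z' = M * (z' - zs) := by
    rw [Matrix.mul_sub, hMz, sub_zero]
  have hx : vstack z' u' - vstack z u = vstack (z' - z) z' := by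
    rw [vstack_sub, hu, add_sub_cancel_left]
  have hGx : frob (G * (vstack z' u' - vstack z u)) (vstack z' u' - vstack zs us) =
      frob (Nᵀ * (z' - z)) (z' - zs) + frob (Mᵀ * (u' - us)) (z' - zs) := by
    rw [hG, hx, vstack_sub, fromBlocks_mul_vstack, frob_vstack, Matrix.zero_mul, Matrix.zero_mul,
      add_zero, zero_add, hMz', frob_mul_left M, frob_comm (z' - zs)]
  have hw : frob (α • vstack (g z - g zs) 0) (vstack z' u' - vstack zs us) =
      α * frob (g zs - g z) (zs - z') := by
    rw [vstack_sub, frob_smul_left, frob_vstack, ← neg_sub (g zs), ← neg_sub zs, frob_neg_left,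
      frob_neg_right, neg_neg]
    simp [frob]
  rw [← sub_sub_sub_cancel_left (vstack zs us) (vstack z u) (vstack z' u'),
    qnorm_sub_qnorm_sub_eq_of_skew hskew hstep, hGx, hw]
  ring

end Blocks

theorem normalizedExtraPush_descent_inequality_general
    {n p : ℕ}
    (N M : Matrix (Fin n) (Fin n) ℝ)
    (G S : Matrix (Fin n ⊕ Fin n) (Fin n ⊕ Fin n) ℝ)
    (hG : G = Matrix.fromBlocks Nᵀ 0 0 M)
    (hS : S = Matrix.fromBlocks 0 M (-Mᵀ) 0)
    (g : Matrix (Fin n) (Fin p) ℝ → Matrix (Fin n) (Fin p) ℝ)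
    (mubar Lbar : ℝ)
    (zs : Matrix (Fin n) (Fin p) ℝ)
    (hmono : ∀ z, mubar * fnorm (zs - z) ^ 2 ≤ frob (g zs - g z) (zs - z))
    (hlip : ∀ z1 z2, fnorm (g z1 - g z2) ≤ Lbar * fnorm (z1 - z2))
    (α : ℝ) (hα : 0 < α)
    (z u : ℕ → Matrix (Fin n) (Fin p) ℝ)
    (v : ℕ → Matrix (Fin n ⊕ Fin n) (Fin p) ℝ)
    (hv : ∀ t, v t = vstack (z t) (u t))
    (hu : ∀ t, u (t + 1) = u t + z (t + 1))
    (hit : ∀ t, Gᵀ * (v (t + 1) - v t) = -(S * v (t + 1)) - α • vstack (g (z t)) 0)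
    (us : Matrix (Fin n) (Fin p) ℝ)
    (vs : Matrix (Fin n ⊕ Fin n) (Fin p) ℝ) (hvs : vs = vstack zs us)
    (hMz : M * zs = 0)
    (hopt : S * vs + α • vstack (g zs) 0 = 0) :
    ∀ σ : ℝ, 0 < σ → ∀ η : ℝ, 0 < η → ∀ t : ℕ,
      qnorm G (v (t + 1) - vs) - qnorm G (v t - vs) ≤
        -qnorm G (v (t + 1) - v t) +
        qnorm ((σ / 2) • (N * Nᵀ) + (α * Lbar ^ 2 / (2 * η)) • (1 : Matrix (Fin n) (Fin n) ℝ))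
          (z (t + 1) - z t) -
        qnorm ((α * mubar - α * η / 2 - 1 / σ) • (1 : Matrix (Fin n) (Fin n) ℝ))
          (zs - z (t + 1)) +
        σ / 2 * qnorm (M * Mᵀ) (us - u (t + 1)) := by
  intro σ hσ η hη t
  subst hvs
  have hid := extraPush_step_identity hG hS (hu t) (by simpa only [hv] using hit t) hMz hopt
  rw [← hv, ← hv] at hid
  have hgrad := mul_le_mul_of_nonneg_left
    (le_frob_sub_of_strongMonotone_of_lipschitz hη hmono hlip (z t) (z (t + 1))) hα.le
  have hyN := frob_le_young hσ (Nᵀ * (z (t + 1) - z t)) (z (t + 1) - zs)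
  have hyM := frob_le_young hσ (Mᵀ * (u (t + 1) - us)) (z (t + 1) - zs)
  rw [frob_self_sub_comm (z (t + 1))] at hyN hyM
  rw [qnorm_add_left, qnorm_smul_left, qnorm_smul_left, qnorm_smul_left, qnorm_one, qnorm_one,
    ← neg_sub (u (t + 1)) us, qnorm_neg, qnorm_mul_transpose, qnorm_mul_transpose]
  linear_combination hid + hyN + hyM + hgrad

/-- the fundamental inequality bounding
`‖v^{t+1} − v*‖²_G − ‖v^t − v*‖²_G` for Normalized ExtraPush in abstract form. -/
theorem normalizedExtraPush_descent_inequality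
    {n p : ℕ} (hn : 1 ≤ n) (hp : 1 ≤ p)
    (N M : Matrix (Fin n) (Fin n) ℝ)
    (G S : Matrix (Fin n ⊕ Fin n) (Fin n ⊕ Fin n) ℝ)
    (hG : G = Matrix.fromBlocks Nᵀ 0 0 M)
    (hS : S = Matrix.fromBlocks 0 M (-Mᵀ) 0)
    (g : Matrix (Fin n) (Fin p) ℝ → Matrix (Fin n) (Fin p) ℝ)
    (mubar Lbar : ℝ) (hmubar : 0 < mubar) (hLbar : 0 < Lbar)
    (zs : Matrix (Fin n) (Fin p) ℝ)
    (hmono : ∀ z, mubar * fnorm (zs - z) ^ 2 ≤ frob (g zs - g z) (zs - z))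
    (hlip : ∀ z1 z2, fnorm (g z1 - g z2) ≤ Lbar * fnorm (z1 - z2))
    (α : ℝ) (hα : 0 < α)
    (z u : ℕ → Matrix (Fin n) (Fin p) ℝ)
    (v : ℕ → Matrix (Fin n ⊕ Fin n) (Fin p) ℝ)
    (hv : ∀ t, v t = vstack (z t) (u t))
    (hu : ∀ t, u (t + 1) = u t + z (t + 1))
    (hit : ∀ t, Gᵀ * (v (t + 1) - v t) = -(S * v (t + 1)) - α • vstack (g (z t)) 0)
    (us : Matrix (Fin n) (Fin p) ℝ)
    (vs : Matrix (Fin n ⊕ Fin n) (Fin p) ℝ) (hvs : vs = vstack zs us)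
    (hMz : M * zs = 0)
    (hopt : S * vs + α • vstack (g zs) 0 = 0) :
    ∀ σ : ℝ, 0 < σ → ∀ η : ℝ, 0 < η → ∀ t : ℕ,
      qnorm G (v (t + 1) - vs) - qnorm G (v t - vs) ≤
        -qnorm G (v (t + 1) - v t) +
        qnorm ((σ / 2) • (N * Nᵀ) + (α * Lbar ^ 2 / (2 * η)) • (1 : Matrix (Fin n) (Fin n) ℝ))
          (z (t + 1) - z t) -
        qnorm ((α * mubar - α * η / 2 - 1 / σ) • (1 : Matrix (Fin n) (Fin n) ℝ))
          (zs - z (t + 1)) +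
        σ / 2 * qnorm (M * Mᵀ) (us - u (t + 1)) :=
  normalizedExtraPush_descent_inequality_general N M G S hG hS g mubar Lbar zs hmono hlip α hα z u v
    hv hu hit us vs hvs hMz hopt
end
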